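/- arXiv:2509.17543 — 6 statements merged into one kernel-verified Lean document; each statement's English description precedes it below -/
import Mathlib

section
/- Let k be a positive definite kernel on X, ψ : X → ℝ^p and φ : ℝ^p → X measurable, and define the pull-back kernel h(z,z') := k(φ(z), φ(z')) on ℝ^p. Then for any probability measures P_X on X and P_Z on ℝ^p, MMD_k(P_X, φ_#P_Z) ≤ MMD_k(P_X, (φ∘ψ)_#P_X) + MMD_h(ψ_#P_X, P_Z). -/
open MeasureTheory

/-- Kernel mean embedding of `P` under the feature map `Φ` into the RKHS `H`. -/
noncomputable def kernelMeanEmbedding {α H : Type*} [MeasurableSpace α]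
    [NormedAddCommGroup H] [InnerProductSpace ℝ H]
    (Φ : α → H) (P : Measure α) : H := ∫ x, Φ x ∂P

/-- MMD between `P` and `Q` for the kernel with feature map `Φ`, as the RKHS norm of
the difference of the kernel mean embeddings. -/
noncomputable def mmd {α H : Type*} [MeasurableSpace α]
    [NormedAddCommGroup H] [InnerProductSpace ℝ H]
    (Φ : α → H) (P Q : Measure α) : ℝ :=
  ‖kernelMeanEmbedding Φ P - kernelMeanEmbedding Φ Q‖

theorem stmt_2 {X H : Type*} [MeasurableSpace X]
    [NormedAddCommGroup H] [InnerProductSpace ℝ H] [CompleteSpace H] {p : ℕ}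
    (k : X → X → ℝ) (Φ : X → H)
    (hk : ∀ x y, k x y = (inner ℝ (Φ x) (Φ y) : ℝ))
    (ψ : X → (Fin p → ℝ)) (φ : (Fin p → ℝ) → X)
    (hψ : Measurable ψ) (hφ : Measurable φ)
    (h : (Fin p → ℝ) → (Fin p → ℝ) → ℝ)
    (hpull : ∀ z z', h z z' = k (φ z) (φ z'))
    (P_X : Measure X) (P_Z : Measure (Fin p → ℝ))
    [IsProbabilityMeasure P_X] [IsProbabilityMeasure P_Z]
    (hΦ1 : AEStronglyMeasurable Φ (P_X.map (φ ∘ ψ)))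
    (hΦ2 : AEStronglyMeasurable Φ (P_Z.map φ))
    (hi1 : Integrable Φ P_X)
    (hi2 : Integrable (fun x => Φ (φ (ψ x))) P_X)
    (hi3 : Integrable (fun z => Φ (φ z)) P_Z) :
    mmd Φ P_X (P_Z.map φ) ≤
      mmd Φ P_X (P_X.map (φ ∘ ψ)) + mmd (fun z => Φ (φ z)) (P_X.map ψ) P_Z := by
  have hmap : P_X.map (φ ∘ ψ) = (P_X.map ψ).map φ := (Measure.map_map hφ hψ).symm
  have hcomp : AEStronglyMeasurable (fun z => Φ (φ z)) (P_X.map ψ) := by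
    rw [hmap] at hΦ1
    exact hΦ1.comp_aemeasurable hφ.aemeasurable
  have e1 : kernelMeanEmbedding Φ (P_Z.map φ) = ∫ z, Φ (φ z) ∂P_Z := by
    unfold kernelMeanEmbedding
    rw [integral_map hφ.aemeasurable hΦ2]
  have e2 : kernelMeanEmbedding Φ (P_X.map (φ ∘ ψ)) = ∫ x, Φ (φ (ψ x)) ∂P_X := by
    unfold kernelMeanEmbedding
    rw [integral_map (hφ.comp hψ).aemeasurable hΦ1]
    rfl
  have e3 : kernelMeanEmbedding (fun z => Φ (φ z)) (P_X.map ψ) = ∫ x, Φ (φ (ψ x)) ∂P_X := by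
    unfold kernelMeanEmbedding
    rw [integral_map hψ.aemeasurable hcomp]
  unfold mmd
  rw [e1, e2, e3]
  have := norm_sub_le_norm_sub_add_norm_sub (kernelMeanEmbedding Φ P_X)
    (∫ x, Φ (φ (ψ x)) ∂P_X) (∫ z, Φ (φ z) ∂P_Z)
  exact this
end

section
/- Let k be a positive definite kernel on X, and let h be the pull-back kernel h(z,z') = k(φ(z),φ(z')) for measurable φ : ℝ^p → X and measurable ψ : X → ℝ^p. Then for any f in the RKHS H_k and probability measures P_X on X, P_Z on ℝ^p: |E_{P_X}[f(X)] − E_{P_Z}[f(φ(Z))]| ≤ ‖f‖_{H_k} · ( MMD_k(P_X, (φ∘ψ)_#P_X) + MMD_h(ψ_#P_X, P_Z) ). -/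
open MeasureTheory

/-- An RKHS function `f = ⟪Φ ·, w⟫` with `‖f‖_{H_k} = ‖w‖` satisfies the integration
error bound controlled by RMMD + EMMD (EMMD taken with the pull-back kernel,
whose feature map is `Φ ∘ φ`). -/
theorem stmt_4 {X H : Type*} [MeasurableSpace X]
    [NormedAddCommGroup H] [InnerProductSpace ℝ H] [CompleteSpace H] {p : ℕ}
    (k : X → X → ℝ) (Φ : X → H)
    (hk : ∀ x y, k x y = (inner ℝ (Φ x) (Φ y) : ℝ))
    (ψ : X → (Fin p → ℝ)) (φ : (Fin p → ℝ) → X)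
    (hψ : Measurable ψ) (hφ : Measurable φ)
    (h : (Fin p → ℝ) → (Fin p → ℝ) → ℝ)
    (hpull : ∀ z z', h z z' = k (φ z) (φ z'))
    (w : H)
    (P_X : Measure X) (P_Z : Measure (Fin p → ℝ))
    [IsProbabilityMeasure P_X] [IsProbabilityMeasure P_Z]
    (hΦ1 : AEStronglyMeasurable Φ (P_X.map (φ ∘ ψ)))
    (hΦ2 : AEStronglyMeasurable Φ (P_Z.map φ))
    (hi1 : Integrable Φ P_X)
    (hi2 : Integrable (fun x => Φ (φ (ψ x))) P_X)
    (hi3 : Integrable (fun z => Φ (φ z)) P_Z) :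
    |(∫ x, (inner ℝ (Φ x) w : ℝ) ∂P_X) - ∫ z, (inner ℝ (Φ (φ z)) w : ℝ) ∂P_Z| ≤
      ‖w‖ * (mmd Φ P_X (P_X.map (φ ∘ ψ)) + mmd (fun z => Φ (φ z)) (P_X.map ψ) P_Z) := by
  set A := ∫ x, Φ x ∂P_X with hA
  set B := ∫ x, Φ (φ (ψ x)) ∂P_X with hB
  set C := ∫ z, Φ (φ z) ∂P_Z with hC
  have h1 : (∫ x, (inner ℝ (Φ x) w : ℝ) ∂P_X) = inner ℝ A w := by
    rw [hA, real_inner_comm, ← integral_inner hi1 w]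
    simp [real_inner_comm]
  have h2 : (∫ z, (inner ℝ (Φ (φ z)) w : ℝ) ∂P_Z) = inner ℝ C w := by
    rw [hC, real_inner_comm, ← integral_inner hi3 w]
    simp [real_inner_comm]
  have hm1 : kernelMeanEmbedding Φ (P_X.map (φ ∘ ψ)) = B := by
    rw [kernelMeanEmbedding, integral_map (hφ.comp hψ).aemeasurable hΦ1, hB]
    rfl
  have hmap : (P_X.map ψ).map φ = P_X.map (φ ∘ ψ) := Measure.map_map hφ hψ
  have hΦφ : AEStronglyMeasurable (fun z => Φ (φ z)) (P_X.map ψ) := by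
    have := hΦ1
    rw [← hmap] at this
    exact this.comp_measurable hφ
  have hm2 : kernelMeanEmbedding (fun z => Φ (φ z)) (P_X.map ψ) = B := by
    rw [kernelMeanEmbedding, integral_map hψ.aemeasurable hΦφ, hB]
  have key : |(∫ x, (inner ℝ (Φ x) w : ℝ) ∂P_X) - ∫ z, (inner ℝ (Φ (φ z)) w : ℝ) ∂P_Z|
      = |(inner ℝ (A - C) w : ℝ)| := by
    rw [h1, h2, inner_sub_left]
  rw [key]
  calc |(inner ℝ (A - C) w : ℝ)| ≤ ‖A - C‖ * ‖w‖ := abs_real_inner_le_norm _ _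
    _ ≤ (‖A - B‖ + ‖B - C‖) * ‖w‖ := by
        gcongr
        exact norm_sub_le_norm_sub_add_norm_sub A B C
    _ = ‖w‖ * (mmd Φ P_X (P_X.map (φ ∘ ψ)) + mmd (fun z => Φ (φ z)) (P_X.map ψ) P_Z) := by
        rw [mmd, mmd, hm1, hm2, kernelMeanEmbedding, kernelMeanEmbedding, ← hA, ← hC]
        ring
end

section
/- Let P and Q be probability distributions on ℝ^d with finite fourth moments, means τ_P, τ_Q and covariance matrices Σ_P, Σ_Q, and let k(x,y) = (1 + xᵀy)². Then MMD_k²(P, Q) = 2‖τ_P − τ_Q‖₂² + ‖Σ_P − Σ_Q + τ_P τ_Pᵀ − τ_Q τ_Qᵀ‖_F², where ‖·‖_F denotes the Frobenius norm. -/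
open MeasureTheory

/-- Squared MMD written via expectations of the kernel. -/
noncomputable def mmdSq {α : Type*} [MeasurableSpace α]
    (k : α → α → ℝ) (P Q : Measure α) : ℝ :=
  (∫ x, ∫ y, k x y ∂P ∂P) - 2 * (∫ x, ∫ y, k x y ∂Q ∂P) + (∫ x, ∫ y, k x y ∂Q ∂Q)

/-- Mean vector `τ_P` of a measure on `ℝ^d`. -/
noncomputable def meanVec {d : ℕ} (P : Measure (Fin d → ℝ)) : Fin d → ℝ :=
  fun i => ∫ x, x i ∂P

/-- Covariance matrix `Σ_P = E[xxᵀ] − τ_P τ_Pᵀ` of a measure on `ℝ^d`. -/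
noncomputable def covMat {d : ℕ} (P : Measure (Fin d → ℝ)) :
    Matrix (Fin d) (Fin d) ℝ :=
  Matrix.of fun i j => (∫ x, x i * x j ∂P) - meanVec P i * meanVec P j

lemma hg_int {d : ℕ} (μ : Measure (Fin d → ℝ)) [IsProbabilityMeasure μ]
    (h4 : Integrable (fun x => (∑ i, (x i) ^ 2) ^ 2) μ) :
    Integrable (fun x : Fin d → ℝ => ∑ i, (x i) ^ 2) μ := by
  have hm : AEStronglyMeasurable (fun x : Fin d → ℝ => ∑ i, (x i) ^ 2) μ :=
    Measurable.aestronglyMeasurable (by measurability)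
  refine ((integrable_const (1:ℝ)).add h4).mono hm ?_
  filter_upwards with x
  simp only [Pi.add_apply]
  have h0 : (0:ℝ) ≤ ∑ i, (x i) ^ 2 := Finset.sum_nonneg fun i _ => sq_nonneg _
  rw [Real.norm_eq_abs, Real.norm_eq_abs, abs_of_nonneg h0,
    abs_of_nonneg (by positivity : (0:ℝ) ≤ 1 + (∑ i, (x i) ^ 2) ^ 2)]
  nlinarith [sq_nonneg ((∑ i, (x i) ^ 2) - 1)]

lemma h2_int {d : ℕ} (μ : Measure (Fin d → ℝ)) [IsProbabilityMeasure μ]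
    (h4 : Integrable (fun x => (∑ i, (x i) ^ 2) ^ 2) μ) (i j : Fin d) :
    Integrable (fun x : Fin d → ℝ => x i * x j) μ := by
  refine (hg_int μ h4).mono
    (((measurable_pi_apply i).mul (measurable_pi_apply j)).aestronglyMeasurable) ?_
  filter_upwards with x
  have h0 : (0:ℝ) ≤ ∑ k, (x k) ^ 2 := Finset.sum_nonneg fun k _ => sq_nonneg _
  rw [Real.norm_eq_abs, Real.norm_eq_abs, abs_of_nonneg h0, abs_mul]
  have hi : (x i)^2 ≤ ∑ k, (x k) ^ 2 :=
    Finset.single_le_sum (fun k _ => sq_nonneg (x k)) (Finset.mem_univ i)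
  have hj : (x j)^2 ≤ ∑ k, (x k) ^ 2 :=
    Finset.single_le_sum (fun k _ => sq_nonneg (x k)) (Finset.mem_univ j)
  nlinarith [sq_nonneg (|x i| - |x j|), sq_abs (x i), sq_abs (x j)]

lemma h1_int {d : ℕ} (μ : Measure (Fin d → ℝ)) [IsProbabilityMeasure μ]
    (h4 : Integrable (fun x => (∑ i, (x i) ^ 2) ^ 2) μ) (i : Fin d) :
    Integrable (fun x : Fin d → ℝ => x i) μ := by
  refine ((integrable_const (1:ℝ)).add (hg_int μ h4)).mono
    ((measurable_pi_apply i).aestronglyMeasurable) ?_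
  filter_upwards with x
  simp only [Pi.add_apply]
  have h0 : (0:ℝ) ≤ ∑ k, (x k) ^ 2 := Finset.sum_nonneg fun k _ => sq_nonneg _
  have hi : (x i)^2 ≤ ∑ k, (x k) ^ 2 :=
    Finset.single_le_sum (fun k _ => sq_nonneg (x k)) (Finset.mem_univ i)
  rw [Real.norm_eq_abs, Real.norm_eq_abs,
    abs_of_nonneg (by positivity : (0:ℝ) ≤ 1 + ∑ k, (x k)^2)]
  nlinarith [sq_abs (x i), abs_nonneg (x i), sq_nonneg (|x i| - 1)]

lemma lin_int {d : ℕ} (μ : Measure (Fin d → ℝ)) [IsProbabilityMeasure μ]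
    (h4 : Integrable (fun x => (∑ i, (x i) ^ 2) ^ 2) μ)
    (a : ℝ) (c : Fin d → ℝ) (C : Fin d → Fin d → ℝ) :
    ∫ x, (a + ∑ i, c i * x i + ∑ i, ∑ j, C i j * (x i * x j)) ∂μ
      = a + (∑ i, c i * (∫ x, x i ∂μ)) + ∑ i, ∑ j, C i j * (∫ x, x i * x j ∂μ) := by
  have hI1 : Integrable (fun x : Fin d → ℝ => ∑ i, c i * x i) μ :=
    integrable_finset_sum _ (fun i _ => (h1_int μ h4 i).const_mul (c i))
  have hI2 : Integrable (fun x : Fin d → ℝ => ∑ i, ∑ j, C i j * (x i * x j)) μ :=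
    integrable_finset_sum _ (fun i _ =>
      integrable_finset_sum _ (fun j _ => (h2_int μ h4 i j).const_mul (C i j)))
  have e1 : ∫ x, (a + ∑ i, c i * x i + ∑ i, ∑ j, C i j * (x i * x j)) ∂μ
      = (∫ x, (a + ∑ i, c i * x i) ∂μ) + ∫ x, (∑ i, ∑ j, C i j * (x i * x j)) ∂μ :=
    integral_add ((integrable_const a).add hI1) hI2
  have e2 : ∫ x, (a + ∑ i, c i * x i) ∂μ
      = (∫ _x, a ∂μ) + ∫ x, (∑ i, c i * x i) ∂μ :=
    integral_add (integrable_const a) hI1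
  rw [e1, e2, integral_const,
    integral_finset_sum _ (fun i _ => (h1_int μ h4 i).const_mul (c i))]
  simp only [measure_univ, probReal_univ, ENNReal.toReal_one, smul_eq_mul, one_mul]
  congr 1
  · congr 1
    exact Finset.sum_congr rfl fun i _ => integral_const_mul _ _
  · rw [integral_finset_sum _ (fun i _ =>
      integrable_finset_sum _ (fun j _ => (h2_int μ h4 i j).const_mul (C i j)))]
    refine Finset.sum_congr rfl fun i _ => ?_
    rw [integral_finset_sum _ (fun j _ => (h2_int μ h4 i j).const_mul (C i j))]
    exact Finset.sum_congr rfl fun j _ => integral_const_mul _ _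

lemma expand {d : ℕ} (P Q : Measure (Fin d → ℝ))
    [IsProbabilityMeasure P] [IsProbabilityMeasure Q]
    (hP4 : Integrable (fun x => (∑ i, (x i) ^ 2) ^ 2) P)
    (hQ4 : Integrable (fun x => (∑ i, (x i) ^ 2) ^ 2) Q) :
    ∫ x, ∫ y, (1 + ∑ i, x i * y i) ^ 2 ∂Q ∂P
      = 1 + 2 * (∑ i, (∫ x, x i ∂P) * (∫ y, y i ∂Q))
        + ∑ i, ∑ j, (∫ x, x i * x j ∂P) * (∫ y, y i * y j ∂Q) := by
  have inner_eq : ∀ x : Fin d → ℝ,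
      ∫ y, (1 + ∑ i, x i * y i) ^ 2 ∂Q
        = 1 + (∑ i, (2 * (∫ y, y i ∂Q)) * x i)
          + ∑ i, ∑ j, ((∫ y, y i * y j ∂Q)) * (x i * x j) := by
    intro x
    have h : (fun y : Fin d → ℝ => (1 + ∑ i, x i * y i) ^ 2)
        = fun y => 1 + ∑ i, (2 * x i) * y i + ∑ i, ∑ j, (x i * x j) * (y i * y j) := by
      funext y
      have hs : (∑ i, x i * y i) * (∑ j, x j * y j)
          = ∑ i, ∑ j, (x i * x j) * (y i * y j) := by
        rw [Finset.sum_mul_sum]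
        exact Finset.sum_congr rfl fun i _ => Finset.sum_congr rfl fun j _ => by ring
      have ht : ∑ i, (2 * x i) * y i = 2 * ∑ i, x i * y i := by
        rw [Finset.mul_sum]; exact Finset.sum_congr rfl fun i _ => by ring
      rw [ht, ← hs]; ring
    rw [h, lin_int Q hQ4 1 (fun i => 2 * x i) (fun i j => x i * x j)]
    congr 1
    · congr 1
      exact Finset.sum_congr rfl fun i _ => by ring
    · exact Finset.sum_congr rfl fun i _ => Finset.sum_congr rfl fun j _ => by ring
  calc ∫ x, ∫ y, (1 + ∑ i, x i * y i) ^ 2 ∂Q ∂P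
      = ∫ x, (1 + (∑ i, (2 * (∫ y, y i ∂Q)) * x i)
          + ∑ i, ∑ j, ((∫ y, y i * y j ∂Q)) * (x i * x j)) ∂P :=
        integral_congr_ae (Filter.Eventually.of_forall fun x => inner_eq x)
    _ = _ := by
        rw [lin_int P hP4 1 (fun i => 2 * (∫ y, y i ∂Q)) (fun i j => ∫ y, y i * y j ∂Q)]
        congr 1
        · congr 1
          rw [Finset.mul_sum]
          exact Finset.sum_congr rfl fun i _ => by ring
        · exact Finset.sum_congr rfl fun i _ => Finset.sum_congr rfl fun j _ => by ring

lemma sumsq {n : ℕ} (f g : Fin n → ℝ) :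
    ∑ i, (f i - g i) ^ 2
      = ∑ i, f i * f i - 2 * ∑ i, f i * g i + ∑ i, g i * g i := by
  have h : ∑ i, (f i - g i) ^ 2 = ∑ i, (f i * f i - 2 * (f i * g i) + g i * g i) :=
    Finset.sum_congr rfl fun i _ => by ring
  rw [h, Finset.sum_add_distrib, Finset.sum_sub_distrib, Finset.mul_sum]

theorem stmt_6 {d : ℕ} (P Q : Measure (Fin d → ℝ))
    [IsProbabilityMeasure P] [IsProbabilityMeasure Q]
    (hP4 : Integrable (fun x => (∑ i, (x i) ^ 2) ^ 2) P)
    (hQ4 : Integrable (fun x => (∑ i, (x i) ^ 2) ^ 2) Q) :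
    mmdSq (fun x y => (1 + ∑ i, x i * y i) ^ 2) P Q =
      2 * (∑ i, (meanVec P i - meanVec Q i) ^ 2) +
        ∑ i, ∑ j,
          ((covMat P i j - covMat Q i j) +
            (meanVec P i * meanVec P j - meanVec Q i * meanVec Q j)) ^ 2 := by
  have key : ∀ i j : Fin d,
      ((covMat P i j - covMat Q i j) +
          (meanVec P i * meanVec P j - meanVec Q i * meanVec Q j))
        = (∫ x, x i * x j ∂P) - (∫ x, x i * x j ∂Q) := by
    intro i j
    simp only [covMat, meanVec, Matrix.of_apply]
    ring
  simp only [key]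
  simp only [mmdSq, meanVec]
  rw [expand P P hP4 hP4, expand P Q hP4 hQ4, expand Q Q hQ4 hQ4,
    sumsq (fun i => ∫ x, x i ∂P) (fun i => ∫ x, x i ∂Q)]
  have hD : ∑ i, ∑ j, ((∫ x, x i * x j ∂P) - (∫ x, x i * x j ∂Q)) ^ 2
      = ∑ i, ∑ j, (∫ x, x i * x j ∂P) * (∫ x, x i * x j ∂P)
        - 2 * ∑ i, ∑ j, (∫ x, x i * x j ∂P) * (∫ x, x i * x j ∂Q)
        + ∑ i, ∑ j, (∫ x, x i * x j ∂Q) * (∫ x, x i * x j ∂Q) := by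
    have h1 : ∑ i, ∑ j, ((∫ x, x i * x j ∂P) - (∫ x, x i * x j ∂Q)) ^ 2
        = ∑ i, (∑ j, (∫ x, x i * x j ∂P) * (∫ x, x i * x j ∂P)
          - 2 * ∑ j, (∫ x, x i * x j ∂P) * (∫ x, x i * x j ∂Q)
          + ∑ j, (∫ x, x i * x j ∂Q) * (∫ x, x i * x j ∂Q)) :=
      Finset.sum_congr rfl fun i _ =>
        sumsq (fun j => ∫ x, x i * x j ∂P) (fun j => ∫ x, x i * x j ∂Q)
    rw [h1, Finset.sum_add_distrib, Finset.sum_sub_distrib, ← Finset.mul_sum]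
  rw [hD]
  ring
end

section
/- Let P be a zero-mean probability distribution on ℝ^d with finite fourth moments and covariance Σ_P, let V ∈ ℝ^{d×p} with VᵀV = I_p, and let k(x,y) = (1+xᵀy)². Then MMD_k²(P, (VVᵀ)_#P) = ‖Σ_P − VVᵀ Σ_P VVᵀ‖_F², where (VVᵀ)_#P is the pushforward of P under x ↦ VVᵀx. -/
open MeasureTheory Matrix

theorem traceKey {d : ℕ} (M S : Matrix (Fin d) (Fin d) ℝ) (hMs : Mᵀ = M) (hSs : Sᵀ = S)
    (hMM : M * M = M) :
    ∑ i, ∑ j, ((M*S*M) i j)^2 = ∑ i, ∑ j, ((M*S*M) i j) * S i j := by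
  set N := M * S * M with hN
  have hNs : Nᵀ = N := by
    rw [hN, transpose_mul, transpose_mul, hMs, hSs, Matrix.mul_assoc]
  have hNsym : ∀ i j, N j i = N i j := fun i j => by
    rw [← Matrix.transpose_apply N i j, hNs]
  have e1 : ∑ i, ∑ j, (N i j)^2 = Matrix.trace (N * N) := by
    simp only [Matrix.trace, Matrix.diag, Matrix.mul_apply]
    refine Finset.sum_congr rfl fun i _ => Finset.sum_congr rfl fun j _ => ?_
    rw [hNsym j i, sq]
  have e2 : ∑ i, ∑ j, (N i j) * S i j = Matrix.trace (N * S) := by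
    simp only [Matrix.trace, Matrix.diag, Matrix.mul_apply]
    rw [Finset.sum_comm]
    refine Finset.sum_congr rfl fun i _ => Finset.sum_congr rfl fun j _ => ?_
    have h : S j i = S i j := by rw [← Matrix.transpose_apply S i j, hSs]
    rw [h, hNsym i j]
  rw [e1, e2]
  have h1 : N * N = (M*S)*(M*M)*(S*M) := by rw [hN]; noncomm_ring
  rw [hMM] at h1
  have h2 : N * S = (M*S)*M*S := by rw [hN]
  rw [h1, h2]
  rw [show (M*S)*M*(S*M) = ((M*S)*M*S)*M from by noncomm_ring, Matrix.trace_mul_comm]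
  rw [show M*((M*S)*M*S) = (M*M)*(S*M*S) from by noncomm_ring, hMM]
  rw [show M*(S*M*S) = (M*S)*M*S from by noncomm_ring]

theorem stmt_7 {d p : ℕ} (P : Measure (Fin d → ℝ)) [IsProbabilityMeasure P]
    (hP4 : Integrable (fun x => (∑ i, (x i) ^ 2) ^ 2) P)
    (hmean : ∀ i, meanVec P i = 0)
    (V : Matrix (Fin d) (Fin p) ℝ) (hV : Vᵀ * V = 1) :
    mmdSq (fun x y => (1 + ∑ i, x i * y i) ^ 2) P
        (P.map (fun x => (V * Vᵀ).mulVec x)) =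
      ∑ i, ∑ j, ((covMat P - (V * Vᵀ) * covMat P * (V * Vᵀ)) i j) ^ 2 := by
  classical
  set M : Matrix (Fin d) (Fin d) ℝ := V * Vᵀ with hMdef
  have hMM : M * M = M := by
    rw [hMdef, Matrix.mul_assoc, ← Matrix.mul_assoc Vᵀ V Vᵀ, hV, Matrix.one_mul]
  have hMs : Mᵀ = M := by rw [hMdef, transpose_mul, transpose_transpose]
  set Sm : Matrix (Fin d) (Fin d) ℝ := Matrix.of fun i j => ∫ x, x i * x j ∂P with hSmdef
  have hSmapp : ∀ i j, Sm i j = ∫ x, x i * x j ∂P := fun i j => rfl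
  have hSs : Smᵀ = Sm := by
    ext i j
    simp only [Matrix.transpose_apply, hSmapp]
    simp_rw [mul_comm]
  have hcov : covMat P = Sm := by
    ext i j
    simp [covMat, hmean, hSmapp]
  -- integrability
  have hg : Integrable (fun x => ∑ i, (x i)^2) P := by
    refine Integrable.mono' ((integrable_const (1:ℝ)).add hP4) ?_ ?_
    · exact (Finset.measurable_sum _ fun i _ =>
        (measurable_pi_apply i).pow_const 2).aestronglyMeasurable
    · filter_upwards with x
      simp only [Pi.add_apply]
      have h0 : (0:ℝ) ≤ ∑ i, (x i)^2 := Finset.sum_nonneg fun i _ => sq_nonneg _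
      rw [Real.norm_eq_abs, abs_of_nonneg h0]
      nlinarith [sq_nonneg ((∑ i, (x i)^2) - 1)]
  have hL2 : ∀ i j, Integrable (fun x => x i * x j) P := by
    intro i j
    refine Integrable.mono' hg
      ((measurable_pi_apply i).mul (measurable_pi_apply j)).aestronglyMeasurable ?_
    filter_upwards with x
    have hi : (x i)^2 ≤ ∑ k, (x k)^2 :=
      Finset.single_le_sum (f := fun k => (x k)^2) (fun k _ => sq_nonneg _) (Finset.mem_univ i)
    have hj : (x j)^2 ≤ ∑ k, (x k)^2 :=
      Finset.single_le_sum (f := fun k => (x k)^2) (fun k _ => sq_nonneg _) (Finset.mem_univ j)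
    rw [Real.norm_eq_abs, abs_mul]
    nlinarith [sq_nonneg (|x i| - |x j|), sq_abs (x i), sq_abs (x j),
      abs_nonneg (x i), abs_nonneg (x j)]
  have hL1 : ∀ i, Integrable (fun x => x i) P := by
    intro i
    refine Integrable.mono' ((integrable_const (1:ℝ)).add hg)
      (measurable_pi_apply i).aestronglyMeasurable ?_
    filter_upwards with x
    simp only [Pi.add_apply]
    have hi : (x i)^2 ≤ ∑ k, (x k)^2 :=
      Finset.single_le_sum (f := fun k => (x k)^2) (fun k _ => sq_nonneg _) (Finset.mem_univ i)
    rw [Real.norm_eq_abs]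
    nlinarith [sq_nonneg (|x i| - 1), sq_abs (x i)]
  -- pointwise expansion of the kernel
  have hexp : ∀ (a y : Fin d → ℝ), (1 + ∑ i, a i * y i)^2
      = 1 + ((∑ i, (2 * a i) * y i) + ∑ i, ∑ j, (a i * a j) * (y i * y j)) := by
    intro a y
    have h1 : (∑ i, a i * y i)^2 = ∑ i, ∑ j, (a i * a j) * (y i * y j) := by
      rw [sq, Finset.sum_mul_sum]
      exact Finset.sum_congr rfl fun i _ => Finset.sum_congr rfl fun j _ => by ring
    have h2 : (∑ i, (2 * a i) * y i) = 2 * ∑ i, a i * y i := by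
      rw [Finset.mul_sum]; exact Finset.sum_congr rfl fun i _ => by ring
    rw [h2, ← h1]; ring
  -- Lemma A : inner integral
  have lemA : ∀ a : Fin d → ℝ,
      ∫ y, (1 + ∑ i, a i * y i)^2 ∂P = 1 + ∑ i, ∑ j, (a i * a j) * Sm i j := by
    intro a
    have hInt1 : Integrable (fun y => ∑ i, (2 * a i) * y i) P :=
      integrable_finset_sum _ fun i _ => (hL1 i).const_mul _
    have hInt2 : Integrable (fun y => ∑ i, ∑ j, (a i * a j) * (y i * y j)) P :=
      integrable_finset_sum _ fun i _ =>
        integrable_finset_sum _ fun j _ => (hL2 i j).const_mul _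
    have hInt12 : Integrable (fun y => (∑ i, (2 * a i) * y i)
        + ∑ i, ∑ j, (a i * a j) * (y i * y j)) P := hInt1.add hInt2
    simp only [hexp a]
    rw [integral_add (integrable_const 1) hInt12, integral_add hInt1 hInt2,
      integral_const, integral_finset_sum _ fun i _ => (hL1 i).const_mul _,
      integral_finset_sum _ fun i (_ : i ∈ Finset.univ) =>
        integrable_finset_sum _ fun j _ => (hL2 i j).const_mul _]
    have hz : ∀ i : Fin d, ∫ y, (2 * a i) * y i ∂P = 0 := by
      intro i
      rw [integral_const_mul]
      have := hmean i
      rw [meanVec] at this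
      rw [this, mul_zero]
    have hz2 : ∀ i : Fin d, ∫ y, ∑ j, (a i * a j) * (y i * y j) ∂P
        = ∑ j, (a i * a j) * Sm i j := by
      intro i
      rw [integral_finset_sum _ fun j _ => (hL2 i j).const_mul _]
      exact Finset.sum_congr rfl fun j _ => by rw [integral_const_mul, hSmapp]
    simp only [hz, hz2, Finset.sum_const_zero, measure_univ, probReal_univ, ENNReal.toReal_one, smul_eq_mul,
      mul_one, one_smul, add_zero, zero_add]
  -- quadratic expressions in mulVec
  have hmv : ∀ (A : Matrix (Fin d) (Fin d) ℝ) (x : Fin d → ℝ) (i j : Fin d),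
      A.mulVec x i * A.mulVec x j = ∑ k, ∑ l, (A i k * A j l) * (x k * x l) := by
    intro A x i j
    simp only [Matrix.mulVec, dotProduct]
    rw [Finset.sum_mul_sum]
    exact Finset.sum_congr rfl fun k _ => Finset.sum_congr rfl fun l _ => by ring
  have hInt2A : ∀ (A : Matrix (Fin d) (Fin d) ℝ) (i j : Fin d),
      Integrable (fun x => A.mulVec x i * A.mulVec x j) P := by
    intro A i j
    simp only [hmv]
    exact integrable_finset_sum _ fun k _ =>
      integrable_finset_sum _ fun l _ => (hL2 k l).const_mul _
  have lemB : ∀ (A : Matrix (Fin d) (Fin d) ℝ) (i j : Fin d),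
      ∫ x, A.mulVec x i * A.mulVec x j ∂P = (A * Sm * Aᵀ) i j := by
    intro A i j
    simp only [hmv]
    rw [integral_finset_sum _ fun k _ =>
      integrable_finset_sum _ fun l _ => (hL2 k l).const_mul _]
    have : ∀ k : Fin d, ∫ x, ∑ l, (A i k * A j l) * (x k * x l) ∂P
        = ∑ l, (A i k * A j l) * Sm k l := by
      intro k
      rw [integral_finset_sum _ fun l _ => (hL2 k l).const_mul _]
      exact Finset.sum_congr rfl fun l _ => by rw [integral_const_mul, hSmapp]
    simp only [this]
    simp only [Matrix.mul_apply, Matrix.transpose_apply, Finset.sum_mul]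
    rw [Finset.sum_comm]
    refine Finset.sum_congr rfl fun k _ => Finset.sum_congr rfl fun l _ => by ring
  -- integral of the quadratic form
  have hquad : ∀ (A : Matrix (Fin d) (Fin d) ℝ),
      ∫ x, (1 + ∑ i, ∑ j, (A.mulVec x i * A.mulVec x j) * Sm i j) ∂P
        = 1 + ∑ i, ∑ j, (A * Sm * Aᵀ) i j * Sm i j := by
    intro A
    have hI : Integrable (fun x => ∑ i, ∑ j, (A.mulVec x i * A.mulVec x j) * Sm i j) P :=
      integrable_finset_sum _ fun i _ =>
        integrable_finset_sum _ fun j _ => (hInt2A A i j).mul_const _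
    rw [integral_add (integrable_const 1) hI, integral_const,
      integral_finset_sum (f := fun i x => ∑ j, (A.mulVec x i * A.mulVec x j) * Sm i j)
        _ fun i _ => integrable_finset_sum _ fun j _ =>
        (hInt2A A i j).mul_const _]
    simp only [measure_univ, probReal_univ, ENNReal.toReal_one, smul_eq_mul, mul_one, one_smul]
    congr 1
    refine Finset.sum_congr rfl fun i _ => ?_
    rw [integral_finset_sum _ fun j _ => (hInt2A A i j).mul_const _]
    refine Finset.sum_congr rfl fun j _ => ?_
    rw [integral_mul_const, lemB A i j]
  -- measurability of linear maps
  have hmeas_mv : ∀ (A : Matrix (Fin d) (Fin d) ℝ),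
      Measurable (fun x : Fin d → ℝ => A.mulVec x) := by
    intro A
    apply measurable_pi_lambda
    intro i
    simp only [Matrix.mulVec, dotProduct]
    exact Finset.measurable_sum _ fun k _ => (measurable_pi_apply k).const_mul _
  -- swapping sums: ⟨x, Az⟩ = ⟨Aᵀx, z⟩
  have hswap : ∀ (A : Matrix (Fin d) (Fin d) ℝ) (x z : Fin d → ℝ),
      ∑ i, x i * A.mulVec z i = ∑ i, Aᵀ.mulVec x i * z i := by
    intro A x z
    simp only [Matrix.mulVec, dotProduct, Matrix.transpose_apply, Finset.mul_sum,
      Finset.sum_mul]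
    rw [Finset.sum_comm]
    exact Finset.sum_congr rfl fun i _ => Finset.sum_congr rfl fun j _ => by ring
  -- the three double integrals
  have hone : ∀ x : Fin d → ℝ, (1 : Matrix (Fin d) (Fin d) ℝ).mulVec x = x :=
    Matrix.one_mulVec
  have hT1 : ∫ x, ∫ y, (1 + ∑ i, x i * y i)^2 ∂P ∂P
      = 1 + ∑ i, ∑ j, Sm i j * Sm i j := by
    have e : (fun x => ∫ y, (1 + ∑ i, x i * y i)^2 ∂P)
        = fun x => 1 + ∑ i, ∑ j,
            ((1 : Matrix (Fin d) (Fin d) ℝ).mulVec x i *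
             (1 : Matrix (Fin d) (Fin d) ℝ).mulVec x j) * Sm i j := by
      funext x
      rw [lemA x]
      simp [hone]
    rw [e, hquad 1]
    simp
  set Q : Measure (Fin d → ℝ) := P.map (fun x => M.mulVec x) with hQdef
  have hinner : ∀ x : Fin d → ℝ,
      ∫ y, (1 + ∑ i, x i * y i)^2 ∂Q
        = 1 + ∑ i, ∑ j, (Mᵀ.mulVec x i * Mᵀ.mulVec x j) * Sm i j := by
    intro x
    rw [hQdef, integral_map (hmeas_mv M).aemeasurable]
    · have e : (fun z => (1 + ∑ i, x i * M.mulVec z i)^2)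
          = fun z => (1 + ∑ i, Mᵀ.mulVec x i * z i)^2 := by
        funext z; rw [hswap]
      rw [e, lemA]
    · apply Measurable.aestronglyMeasurable
      exact ((measurable_const.add (Finset.measurable_sum _ fun i _ =>
        (measurable_pi_apply i).const_mul _)).pow_const 2)
  have hT2 : ∫ x, ∫ y, (1 + ∑ i, x i * y i)^2 ∂Q ∂P
      = 1 + ∑ i, ∑ j, (M * Sm * M) i j * Sm i j := by
    have e : (fun x => ∫ y, (1 + ∑ i, x i * y i)^2 ∂Q)
        = fun x => 1 + ∑ i, ∑ j, (Mᵀ.mulVec x i * Mᵀ.mulVec x j) * Sm i j :=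
      funext hinner
    rw [e, hquad Mᵀ, transpose_transpose, hMs]
  have hT3 : ∫ x, ∫ y, (1 + ∑ i, x i * y i)^2 ∂Q ∂Q
      = 1 + ∑ i, ∑ j, (M * Sm * M) i j * Sm i j := by
    have e : (fun x => ∫ y, (1 + ∑ i, x i * y i)^2 ∂Q)
        = fun x => 1 + ∑ i, ∑ j, (Mᵀ.mulVec x i * Mᵀ.mulVec x j) * Sm i j :=
      funext hinner
    rw [e, hQdef, integral_map (hmeas_mv M).aemeasurable]
    · have e2 : (fun z => 1 + ∑ i, ∑ j,
          (Mᵀ.mulVec (M.mulVec z) i * Mᵀ.mulVec (M.mulVec z) j) * Sm i j)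
          = fun z => 1 + ∑ i, ∑ j, (M.mulVec z i * M.mulVec z j) * Sm i j := by
        funext z
        have : Mᵀ.mulVec (M.mulVec z) = M.mulVec z := by
          rw [Matrix.mulVec_mulVec, hMs, hMM]
        rw [this]
      rw [e2, hquad M, hMs]
    · apply Measurable.aestronglyMeasurable
      apply Measurable.const_add
      apply Finset.measurable_sum
      intro i _
      apply Finset.measurable_sum
      intro j _
      exact (((hmeas_mv Mᵀ).eval (a := i)).mul ((hmeas_mv Mᵀ).eval (a := j))).mul_const _
  -- assemble
  simp only [mmdSq]
  rw [hT1, hT2, hT3, hcov]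
  have key := traceKey M Sm hMs hSs hMM
  have expand : ∀ i j : Fin d, ((Sm - M * Sm * M) i j)^2
      = Sm i j * Sm i j - 2 * ((M*Sm*M) i j * Sm i j) + ((M*Sm*M) i j)^2 := by
    intro i j
    simp only [Matrix.sub_apply]
    ring
  simp only [expand]
  rw [Finset.sum_congr rfl fun i (_ : i ∈ Finset.univ) =>
    (Finset.sum_add_distrib (s := Finset.univ))]
  rw [Finset.sum_add_distrib]
  rw [Finset.sum_congr rfl fun i (_ : i ∈ Finset.univ) =>
    (Finset.sum_sub_distrib (s := Finset.univ) _ _)]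
  rw [Finset.sum_sub_distrib, key]
  have : ∑ i, ∑ j, 2 * ((M*Sm*M) i j * Sm i j)
      = 2 * ∑ i, ∑ j, (M*Sm*M) i j * Sm i j := by
    rw [Finset.mul_sum]
    exact Finset.sum_congr rfl fun i _ => by rw [Finset.mul_sum]
  rw [this]
  ring
end

section
/- Maximising Tr(PSPS) over symmetric idempotent matrices P of rank p, where S is symmetric positive semidefinite with eigenvalues λ₁ ≥ ⋯ ≥ λ_d, achieves maximum value Σ_{i=1}^p λ_i², attained by the orthogonal projector onto the span of the top p eigenvectors of S. -/
open Matrix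

lemma aux_trace_nonneg {d : ℕ} (M : Matrix (Fin d) (Fin d) ℝ) : 0 ≤ (Mᵀ * M).trace := by
  rw [Matrix.trace]
  apply Finset.sum_nonneg
  intro i _
  simp only [Matrix.diag_apply, Matrix.mul_apply, Matrix.transpose_apply]
  exact Finset.sum_nonneg fun j _ => mul_self_nonneg _

lemma aux_trace_eq_rank {d : ℕ} (P : Matrix (Fin d) (Fin d) ℝ)
    (hsym : P.IsSymm) (hidem : P * P = P) : P.trace = (P.rank : ℝ) := by
  have hH : P.IsHermitian := by
    rwa [Matrix.IsHermitian, conjTranspose_eq_transpose_of_trivial]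
  set V : Matrix (Fin d) (Fin d) ℝ := (hH.eigenvectorUnitary : Matrix (Fin d) (Fin d) ℝ) with hV
  have hVV : star V * V = 1 := mem_unitaryGroup_iff'.mp hH.eigenvectorUnitary.2
  have hVV' : V * star V = 1 := mem_unitaryGroup_iff.mp hH.eigenvectorUnitary.2
  have hdiag : star V * P * V = diagonal (RCLike.ofReal ∘ hH.eigenvalues) :=
    by rw [← hH.conjStarAlgAut_star_eigenvectorUnitary, Unitary.conjStarAlgAut_star_apply]
  have hofReal : (RCLike.ofReal ∘ hH.eigenvalues : Fin d → ℝ) = hH.eigenvalues := by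
    funext i; simp
  rw [hofReal] at hdiag
  -- eigenvalues are 0 or 1
  have hmu : ∀ i, hH.eigenvalues i = 0 ∨ hH.eigenvalues i = 1 := by
    intro i
    have h2 : diagonal hH.eigenvalues * diagonal hH.eigenvalues = diagonal hH.eigenvalues := by
      rw [← hdiag]
      calc (star V * P * V) * (star V * P * V) = star V * P * (V * star V) * P * V := by
            noncomm_ring
        _ = star V * (P * P) * V := by rw [hVV']; noncomm_ring
        _ = star V * P * V := by rw [hidem]
    have := congrFun (congrFun h2 i) i
    simp [Matrix.diagonal_mul_diagonal, Matrix.diagonal_apply_eq] at this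
    have h0 : hH.eigenvalues i * (hH.eigenvalues i - 1) = 0 := by nlinarith [this]
    rcases mul_eq_zero.mp h0 with h | h
    · exact Or.inl h
    · exact Or.inr (by linarith)
  have htr : P.trace = ∑ i, hH.eigenvalues i := by
    conv_lhs => rw [hH.spectral_theorem]
    rw [Unitary.conjStarAlgAut_apply, hofReal, Matrix.trace_mul_cycle, ← hV, hVV, Matrix.one_mul,
      Matrix.trace_diagonal]
  have hrank : P.rank = Fintype.card {i // hH.eigenvalues i ≠ 0} := hH.rank_eq_card_non_zero_eigs
  rw [htr, hrank, Fintype.card_subtype]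
  rw [Finset.card_filter]
  push_cast
  apply Finset.sum_congr rfl
  intro i _
  rcases hmu i with h | h <;> simp [h]

lemma aux_diag_nonneg {d : ℕ} (Q : Matrix (Fin d) (Fin d) ℝ)
    (hsym : Q.IsSymm) (hidem : Q * Q = Q) (i : Fin d) : 0 ≤ Q i i := by
  have h : Q i i = ∑ j, Q i j ^ 2 := by
    conv_lhs => rw [← hidem]
    rw [Matrix.mul_apply]
    apply Finset.sum_congr rfl
    intro j _
    rw [hsym.apply i j]
    ring
  rw [h]
  exact Finset.sum_nonneg fun j _ => sq_nonneg _

lemma aux_diag_le_one {d : ℕ} (Q : Matrix (Fin d) (Fin d) ℝ)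
    (hsym : Q.IsSymm) (hidem : Q * Q = Q) (i : Fin d) : Q i i ≤ 1 := by
  have hs : (1 - Q).IsSymm := by
    rw [Matrix.IsSymm, Matrix.transpose_sub, Matrix.transpose_one, hsym]
  have hi : (1 - Q) * (1 - Q) = 1 - Q := by
    have : (1 - Q) * (1 - Q) = 1 - Q - Q + Q * Q := by noncomm_ring
    rw [this, hidem]
    abel
  have := aux_diag_nonneg (1 - Q) hs hi i
  simp only [Matrix.sub_apply, Matrix.one_apply_eq] at this
  linarith

theorem stmt_12 {d p : ℕ} (hpd : p ≤ d)
    (U : Matrix (Fin d) (Fin d) ℝ) (lam : Fin d → ℝ)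
    (hU : Uᵀ * U = 1) (hmono : Antitone lam) (hnn : ∀ i, 0 ≤ lam i)
    (S : Matrix (Fin d) (Fin d) ℝ) (hS : S = U * Matrix.diagonal lam * Uᵀ) :
    IsGreatest
        {t : ℝ | ∃ P : Matrix (Fin d) (Fin d) ℝ,
          P.IsSymm ∧ P * P = P ∧ P.rank = p ∧ t = (P * S * P * S).trace}
        (∑ i ∈ Finset.univ.filter (fun i : Fin d => (i : ℕ) < p), (lam i) ^ 2) ∧
      ((U * Matrix.diagonal (fun i : Fin d => if (i : ℕ) < p then (1 : ℝ) else 0) * Uᵀ) * S *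
            (U * Matrix.diagonal (fun i : Fin d => if (i : ℕ) < p then (1 : ℝ) else 0) * Uᵀ) *
            S).trace =
        ∑ i ∈ Finset.univ.filter (fun i : Fin d => (i : ℕ) < p), (lam i) ^ 2 := by
  classical
  have hU' : U * Uᵀ = 1 := mul_eq_one_comm.mp hU
  set ind : Fin d → ℝ := fun i => if (i : ℕ) < p then (1 : ℝ) else 0 with hind
  set D : Matrix (Fin d) (Fin d) ℝ := Matrix.diagonal ind with hD
  -- collapse lemma
  have hcollapse : ∀ A B : Matrix (Fin d) (Fin d) ℝ,
      (U * A * Uᵀ) * (U * B * Uᵀ) = U * (A * B) * Uᵀ := by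
    intro A B
    calc (U * A * Uᵀ) * (U * B * Uᵀ) = U * A * (Uᵀ * U) * B * Uᵀ := by noncomm_ring
      _ = U * A * 1 * B * Uᵀ := by rw [hU]
      _ = U * (A * B) * Uᵀ := by noncomm_ring
  have htrace_conj : ∀ A : Matrix (Fin d) (Fin d) ℝ, (U * A * Uᵀ).trace = A.trace := by
    intro A
    rw [Matrix.trace_mul_cycle, hU, Matrix.one_mul]
  have hcard : (Finset.univ.filter (fun i : Fin d => (i : ℕ) < p)).card = p := by
    have heq : Finset.univ.filter (fun i : Fin d => (i : ℕ) < p)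
        = Finset.map (Fin.castLEEmb hpd) Finset.univ := by
      ext i
      simp only [Finset.mem_filter, Finset.mem_univ, true_and, Finset.mem_map]
      constructor
      · intro h
        exact ⟨⟨(i : ℕ), h⟩, by ext; simp⟩
      · rintro ⟨j, rfl⟩
        simpa using j.2
    rw [heq, Finset.card_map, Finset.card_univ, Fintype.card_fin]
  -- the attained trace value
  have hDD : D * D = D := by
    have hii : (fun i => ind i * ind i) = ind := by
      funext i
      by_cases h : (i : ℕ) < p <;> simp [hind, h]
    rw [hD, Matrix.diagonal_mul_diagonal, hii]
  have hattain : ((U * D * Uᵀ) * S * (U * D * Uᵀ) * S).trace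
      = ∑ i ∈ Finset.univ.filter (fun i : Fin d => (i : ℕ) < p), (lam i) ^ 2 := by
    rw [hS, hcollapse, hcollapse, hcollapse, htrace_conj, hD,
      Matrix.diagonal_mul_diagonal, Matrix.diagonal_mul_diagonal,
      Matrix.diagonal_mul_diagonal, Matrix.trace_diagonal, Finset.sum_filter]
    apply Finset.sum_congr rfl
    intro i _
    by_cases h : (i : ℕ) < p <;> simp [hind, h] <;> ring
  have hmem : (∑ i ∈ Finset.univ.filter (fun i : Fin d => (i : ℕ) < p), (lam i) ^ 2) ∈
      {t : ℝ | ∃ P : Matrix (Fin d) (Fin d) ℝ,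
          P.IsSymm ∧ P * P = P ∧ P.rank = p ∧ t = (P * S * P * S).trace} := by
    refine ⟨U * D * Uᵀ, ?_, ?_, ?_, hattain.symm⟩
    · rw [Matrix.IsSymm]
      rw [Matrix.transpose_mul, Matrix.transpose_mul, Matrix.transpose_transpose, hD,
        Matrix.diagonal_transpose, Matrix.mul_assoc]
    · rw [hcollapse, hDD]
    · have hdetU : IsUnit U.det := by
        have h1 : Uᵀ.det * U.det = 1 := by
          rw [← Matrix.det_mul, hU, Matrix.det_one]
        rw [Matrix.det_transpose] at h1
        exact IsUnit.of_mul_eq_one _ h1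
      have hdetUT : IsUnit Uᵀ.det := by rwa [Matrix.det_transpose]
      rw [Matrix.rank_mul_eq_left_of_isUnit_det _ _ hdetUT,
        Matrix.rank_mul_eq_right_of_isUnit_det _ _ hdetU, hD, Matrix.rank_diagonal,
        Fintype.card_subtype]
      rw [← hcard]
      congr 1
      apply Finset.filter_congr
      intro i _
      by_cases h : (i : ℕ) < p <;> simp [hind, h]
  -- upper bound
  have hub : ∀ t ∈ {t : ℝ | ∃ P : Matrix (Fin d) (Fin d) ℝ,
          P.IsSymm ∧ P * P = P ∧ P.rank = p ∧ t = (P * S * P * S).trace},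
      t ≤ ∑ i ∈ Finset.univ.filter (fun i : Fin d => (i : ℕ) < p), (lam i) ^ 2 := by
    rintro t ⟨P, hPsym, hPidem, hPrank, rfl⟩
    have hSsym : Sᵀ = S := by
      rw [hS, Matrix.transpose_mul, Matrix.transpose_mul, Matrix.transpose_transpose,
        Matrix.diagonal_transpose, Matrix.mul_assoc]
    set Q : Matrix (Fin d) (Fin d) ℝ := Uᵀ * P * U with hQdef
    have hQsym : Q.IsSymm := by
      rw [Matrix.IsSymm, hQdef, Matrix.transpose_mul, Matrix.transpose_mul,
        Matrix.transpose_transpose, hPsym.eq, Matrix.mul_assoc]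
    have hQidem : Q * Q = Q := by
      rw [hQdef]
      calc (Uᵀ * P * U) * (Uᵀ * P * U) = Uᵀ * P * (U * Uᵀ) * P * U := by noncomm_ring
        _ = Uᵀ * P * 1 * P * U := by rw [hU']
        _ = Uᵀ * (P * P) * U := by noncomm_ring
        _ = Uᵀ * P * U := by rw [hPidem, Matrix.mul_assoc]
    have hQ0 : ∀ i, 0 ≤ Q i i := aux_diag_nonneg Q hQsym hQidem
    have hQ1 : ∀ i, Q i i ≤ 1 := aux_diag_le_one Q hQsym hQidem
    have hQsum : ∑ i, Q i i = (p : ℝ) := by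
      have h1 : Q.trace = P.trace := by
        rw [hQdef, Matrix.trace_mul_cycle, hU', Matrix.one_mul]
      have h2 : P.trace = (p : ℝ) := by
        rw [aux_trace_eq_rank P hPsym hPidem, hPrank]
      rw [← h2, ← h1, Matrix.trace]
      rfl
    -- step 1: Tr(PSPS) ≤ Tr(PSS)
    have hstep1 : (P * S * P * S).trace ≤ (P * S * S).trace := by
      have h0 := aux_trace_nonneg ((1 - P) * S * P)
      have h4 : (1 - P) * (1 - P) = 1 - P := by
        have h5 : (1 - P) * (1 - P) = 1 - P - P + P * P := by noncomm_ring
        rw [h5, hPidem]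
        abel
      have hMM : ((1 - P) * S * P)ᵀ * ((1 - P) * S * P) = P * S * (1 - P) * S * P := by
        have ht : ((1 - P) * S * P)ᵀ = P * S * (1 - P) := by
          rw [Matrix.transpose_mul, Matrix.transpose_mul, Matrix.transpose_sub,
            Matrix.transpose_one, hPsym.eq, hSsym, ← Matrix.mul_assoc]
        rw [ht]
        calc P * S * (1 - P) * ((1 - P) * S * P)
            = P * S * ((1 - P) * (1 - P)) * S * P := by noncomm_ring
          _ = P * S * (1 - P) * S * P := by rw [h4]
      rw [hMM] at h0
      have he : (P * S * (1 - P) * S * P).trace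
          = (P * S * S).trace - (P * S * P * S).trace := by
        rw [Matrix.trace_mul_comm]
        have e2 : P * (P * S * (1 - P) * S) = P * P * S * (1 - P) * S := by noncomm_ring
        rw [e2, hPidem]
        have e3 : P * S * (1 - P) * S = P * S * S - P * S * P * S := by noncomm_ring
        rw [e3, Matrix.trace_sub]
      rw [he] at h0
      linarith
    -- step 2: Tr(PSS) = ∑ Q i i * lam i ^ 2
    have hSS : S * S = U * Matrix.diagonal (fun i => lam i ^ 2) * Uᵀ := by
      rw [hS, hcollapse, Matrix.diagonal_mul_diagonal]
      have : (fun i => lam i * lam i) = fun i => lam i ^ 2 := by funext i; ring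
      rw [this]
    have htrdiag : ∀ (A : Matrix (Fin d) (Fin d) ℝ) (w : Fin d → ℝ),
        (A * Matrix.diagonal w).trace = ∑ i, A i i * w i := by
      intro A w
      rw [Matrix.trace]
      apply Finset.sum_congr rfl
      intro i _
      rw [Matrix.diag_apply, Matrix.mul_apply, Finset.sum_eq_single i]
      · rw [Matrix.diagonal_apply_eq]
      · intro j _ hj
        simp [Matrix.diagonal_apply, hj]
      · intro h
        exact absurd (Finset.mem_univ i) h
    have hstep2 : (P * S * S).trace = ∑ i, Q i i * lam i ^ 2 := by
      rw [Matrix.mul_assoc, hSS]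
      have e1 : P * (U * Matrix.diagonal (fun i => lam i ^ 2) * Uᵀ)
          = (P * U * Matrix.diagonal (fun i => lam i ^ 2)) * Uᵀ := by noncomm_ring
      rw [e1, Matrix.trace_mul_comm]
      have e2 : Uᵀ * (P * U * Matrix.diagonal (fun i => lam i ^ 2))
          = Q * Matrix.diagonal (fun i => lam i ^ 2) := by
        rw [hQdef]; noncomm_ring
      rw [e2, htrdiag]
    -- step 3: ∑ Q i i * lam i ^ 2 ≤ target
    have hindsum : ∑ i : Fin d, ind i = (p : ℝ) := by
      rw [hind]
      rw [Finset.sum_boole, hcard]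
    have hstep3 : ∑ i, Q i i * lam i ^ 2
        ≤ ∑ i ∈ Finset.univ.filter (fun i : Fin d => (i : ℕ) < p), (lam i) ^ 2 := by
      set c : ℝ := if h : p < d then lam ⟨p, h⟩ ^ 2 else 0 with hc
      have hcle : ∀ i : Fin d, (i : ℕ) < p → c ≤ lam i ^ 2 := by
        intro i hi
        by_cases h : p < d
        · rw [hc, dif_pos h]
          have hle : lam ⟨p, h⟩ ≤ lam i := hmono (by simp [Fin.le_def]; omega)
          exact pow_le_pow_left₀ (hnn _) hle 2
        · rw [hc, dif_neg h]
          positivity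
      have hcge : ∀ i : Fin d, ¬ (i : ℕ) < p → lam i ^ 2 ≤ c := by
        intro i hi
        have hpd' : p < d := lt_of_le_of_lt (le_of_not_gt hi) i.2
        rw [hc, dif_pos hpd']
        have hle : lam i ≤ lam ⟨p, hpd'⟩ := hmono (by simp [Fin.le_def]; omega)
        exact pow_le_pow_left₀ (hnn _) hle 2
      have hpt : ∀ i : Fin d, Q i i * lam i ^ 2
          ≤ (if (i : ℕ) < p then lam i ^ 2 else 0) + (Q i i - ind i) * c := by
        intro i
        by_cases h : (i : ℕ) < p
        · rw [if_pos h, hind]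
          simp only [h, if_true]
          nlinarith [hcle i h, hQ1 i]
        · rw [if_neg h, hind]
          simp only [h, if_false]
          nlinarith [hcge i h, hQ0 i]
      calc ∑ i, Q i i * lam i ^ 2
          ≤ ∑ i : Fin d, ((if (i : ℕ) < p then lam i ^ 2 else 0) + (Q i i - ind i) * c) :=
            Finset.sum_le_sum fun i _ => hpt i
        _ = (∑ i ∈ Finset.univ.filter (fun i : Fin d => (i : ℕ) < p), (lam i) ^ 2)
            + ((∑ i, Q i i) - ∑ i : Fin d, ind i) * c := by
            rw [Finset.sum_add_distrib, ← Finset.sum_filter]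
            congr 1
            rw [← Finset.sum_mul, Finset.sum_sub_distrib]
        _ = ∑ i ∈ Finset.univ.filter (fun i : Fin d => (i : ℕ) < p), (lam i) ^ 2 := by
            rw [hQsum, hindsum]
            ring
    calc (P * S * P * S).trace ≤ (P * S * S).trace := hstep1
      _ = ∑ i, Q i i * lam i ^ 2 := hstep2
      _ ≤ _ := hstep3
  exact ⟨⟨hmem, hub⟩, hattain⟩
end

section
/- Let P and Q be zero-mean probability distributions on ℝ^d with finite fourth moments and covariances Σ_P, Σ_Q, and let k(x,y) = (1+xᵀy)². Then MMD_k(P,Q) = 0 if and only if Σ_P = Σ_Q. -/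
open MeasureTheory

section Aux

variable {d : ℕ} (μ : Measure (Fin d → ℝ)) [IsProbabilityMeasure μ]

lemma int_prod (h4 : Integrable (fun x => (∑ i, (x i) ^ 2) ^ 2) μ) (i j : Fin d) :
    Integrable (fun x => x i * x j) μ := by
  refine ((integrable_const (1 : ℝ)).add h4).mono'
    (((measurable_pi_apply i).mul (measurable_pi_apply j)).aestronglyMeasurable)
    (Filter.Eventually.of_forall fun x => ?_)
  have hi : (x i) ^ 2 ≤ ∑ k, (x k) ^ 2 :=
    Finset.single_le_sum (f := fun k => (x k) ^ 2) (fun k _ => sq_nonneg _) (Finset.mem_univ i)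
  have hj : (x j) ^ 2 ≤ ∑ k, (x k) ^ 2 :=
    Finset.single_le_sum (f := fun k => (x k) ^ 2) (fun k _ => sq_nonneg _) (Finset.mem_univ j)
  simp only [Pi.add_apply]
  rw [Real.norm_eq_abs, abs_mul]
  nlinarith [abs_nonneg (x i), abs_nonneg (x j), sq_abs (x i), sq_abs (x j),
    sq_nonneg (|x i| - |x j|), sq_nonneg ((∑ k, (x k) ^ 2) - 1)]

lemma int_coord (h4 : Integrable (fun x => (∑ i, (x i) ^ 2) ^ 2) μ) (i : Fin d) :
    Integrable (fun x => x i) μ := by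
  refine ((integrable_const (2 : ℝ)).add h4).mono'
    ((measurable_pi_apply i).aestronglyMeasurable)
    (Filter.Eventually.of_forall fun x => ?_)
  have hi : (x i) ^ 2 ≤ ∑ k, (x k) ^ 2 :=
    Finset.single_le_sum (f := fun k => (x k) ^ 2) (fun k _ => sq_nonneg _) (Finset.mem_univ i)
  simp only [Pi.add_apply]
  rw [Real.norm_eq_abs]
  nlinarith [abs_nonneg (x i), sq_abs (x i), sq_nonneg (|x i| - 1),
    sq_nonneg ((∑ k, (x k) ^ 2) - 1)]

lemma inner_eq (h4 : Integrable (fun x => (∑ i, (x i) ^ 2) ^ 2) μ)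
    (hmean : ∀ i, meanVec μ i = 0) (x : Fin d → ℝ) :
    ∫ y, (1 + ∑ i, x i * y i) ^ 2 ∂μ
      = 1 + ∑ i, ∑ j, x i * x j * ∫ y, y i * y j ∂μ := by
  have h1 : ∀ y : Fin d → ℝ, (1 + ∑ i, x i * y i) ^ 2
      = (1 + ∑ i, (2 * x i) * y i) + ∑ i, ∑ j, (x i * x j) * (y i * y j) := by
    intro y
    have hsq : (∑ i, x i * y i) ^ 2 = ∑ i, ∑ j, (x i * x j) * (y i * y j) := by
      rw [sq, Finset.sum_mul_sum]
      exact Finset.sum_congr rfl fun i _ => Finset.sum_congr rfl fun j _ => by ring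
    have h2 : ∑ i, (2 * x i) * y i = 2 * ∑ i, x i * y i := by
      rw [Finset.mul_sum]; exact Finset.sum_congr rfl fun i _ => by ring
    rw [h2]
    linear_combination hsq
  simp only [h1]
  have hA : Integrable (fun y => 1 + ∑ i, (2 * x i) * y i) μ :=
    (integrable_const 1).add
      (integrable_finset_sum _ fun i _ => (int_coord μ h4 i).const_mul _)
  have hB : Integrable (fun y => ∑ i, ∑ j, (x i * x j) * (y i * y j)) μ :=
    integrable_finset_sum _ fun i _ =>
      integrable_finset_sum _ fun j _ => (int_prod μ h4 i j).const_mul _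
  rw [integral_add hA hB,
    integral_add (integrable_const 1)
      (integrable_finset_sum _ fun i _ => (int_coord μ h4 i).const_mul _),
    integral_finset_sum _ fun i _ => (int_coord μ h4 i).const_mul _,
    integral_finset_sum _ fun i _ =>
      integrable_finset_sum _ fun j _ => (int_prod μ h4 i j).const_mul _]
  have hm : ∀ i, (∫ y, y i ∂μ) = 0 := hmean
  simp only [integral_const_mul, integral_const, measure_univ, probReal_univ, ENNReal.toReal_one,
    smul_eq_mul, one_mul, hm, mul_zero, Finset.sum_const_zero, add_zero]
  congr 1
  exact Finset.sum_congr rfl fun i _ => by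
    rw [integral_finset_sum _ fun j _ => (int_prod μ h4 i j).const_mul _]
    exact Finset.sum_congr rfl fun j _ => by rw [integral_const_mul]

lemma outer_eq (h4 : Integrable (fun x => (∑ i, (x i) ^ 2) ^ 2) μ)
    (c : Fin d → Fin d → ℝ) :
    ∫ x, (1 + ∑ i, ∑ j, x i * x j * c i j) ∂μ
      = 1 + ∑ i, ∑ j, (∫ x, x i * x j ∂μ) * c i j := by
  have hB : Integrable (fun x => ∑ i, ∑ j, x i * x j * c i j) μ :=
    integrable_finset_sum _ fun i _ =>
      integrable_finset_sum _ fun j _ => (int_prod μ h4 i j).mul_const _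
  rw [integral_add (integrable_const 1) hB,
    integral_finset_sum _ fun i _ =>
      integrable_finset_sum _ fun j _ => (int_prod μ h4 i j).mul_const _]
  simp only [integral_const, measure_univ, probReal_univ, ENNReal.toReal_one, smul_eq_mul, one_mul]
  congr 1
  exact Finset.sum_congr rfl fun i _ => by
    rw [integral_finset_sum _ fun j _ => (int_prod μ h4 i j).mul_const _]
    exact Finset.sum_congr rfl fun j _ => by rw [integral_mul_const]

end Aux


theorem stmt_19 {d : ℕ} (P Q : Measure (Fin d → ℝ))
    [IsProbabilityMeasure P] [IsProbabilityMeasure Q]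
    (hP4 : Integrable (fun x => (∑ i, (x i) ^ 2) ^ 2) P)
    (hQ4 : Integrable (fun x => (∑ i, (x i) ^ 2) ^ 2) Q)
    (hPmean : ∀ i, meanVec P i = 0) (hQmean : ∀ i, meanVec Q i = 0) :
    mmdSq (fun x y => (1 + ∑ i, x i * y i) ^ 2) P Q = 0 ↔ covMat P = covMat Q := by
  have alg : ∀ (A B : Fin d → Fin d → ℝ),
      (1 + ∑ i, ∑ j, A i j * A i j) - 2 * (1 + ∑ i, ∑ j, A i j * B i j)
        + (1 + ∑ i, ∑ j, B i j * B i j) = ∑ i, ∑ j, (A i j - B i j) ^ 2 := by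
    intro A B
    have h2 : (2:ℝ) * ∑ i, ∑ j, A i j * B i j = ∑ i, ∑ j, 2 * (A i j * B i j) := by
      rw [Finset.mul_sum]
      exact Finset.sum_congr rfl fun i _ => by rw [Finset.mul_sum]
    have hs : ∑ i, ∑ j, (A i j - B i j) ^ 2
        = (∑ i, ∑ j, A i j * A i j) - (∑ i, ∑ j, 2 * (A i j * B i j))
          + ∑ i, ∑ j, B i j * B i j := by
      rw [← Finset.sum_sub_distrib, ← Finset.sum_add_distrib]
      refine Finset.sum_congr rfl fun i _ => ?_
      rw [← Finset.sum_sub_distrib, ← Finset.sum_add_distrib]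
      exact Finset.sum_congr rfl fun j _ => by ring
    rw [hs, ← h2]; ring
  have key : mmdSq (fun x y => (1 + ∑ i, x i * y i) ^ 2) P Q
      = ∑ i, ∑ j, ((∫ x, x i * x j ∂P) - ∫ x, x i * x j ∂Q) ^ 2 := by
    unfold mmdSq
    simp only [inner_eq P hP4 hPmean, inner_eq Q hQ4 hQmean]
    rw [outer_eq P hP4, outer_eq P hP4, outer_eq Q hQ4]
    exact alg (fun i j => ∫ x, x i * x j ∂P) (fun i j => ∫ x, x i * x j ∂Q)
  have hcov : ∀ i j, covMat P i j = ∫ x, x i * x j ∂P := fun i j => by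
    simp [covMat, hPmean]
  have hcovQ : ∀ i j, covMat Q i j = ∫ x, x i * x j ∂Q := fun i j => by
    simp [covMat, hQmean]
  rw [key]
  constructor
  · intro h
    ext i j
    rw [hcov, hcovQ, ← sub_eq_zero, ← pow_eq_zero_iff (n := 2) (by norm_num)]
    have h1 := (Finset.sum_eq_zero_iff_of_nonneg
      (fun i _ => Finset.sum_nonneg fun j _ => sq_nonneg _)).mp h i (Finset.mem_univ i)
    exact (Finset.sum_eq_zero_iff_of_nonneg
      (fun j _ => sq_nonneg _)).mp h1 j (Finset.mem_univ j)
  · intro h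
    have heq : ∀ i j, (∫ x, x i * x j ∂P) = ∫ x, x i * x j ∂Q := fun i j => by
      rw [← hcov, ← hcovQ, h]
    exact Finset.sum_eq_zero fun i _ => Finset.sum_eq_zero fun j _ => by
      rw [heq i j]; ring
end
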